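/- Let n ≥ 2 and let ψ : Σ^n → ℂ be a function such that: (i) ψ(u·00·v) = ψ(u·lr·v), ψ(u·0l·v) = ψ(u·l0·v), and ψ(u·0r·v) = ψ(u·r0·v) for all strings u, v with |u| + |v| = n − 2; (ii) ψ(s) = 0 whenever the first letter of s is r; (iii) ψ(s) = 0 whenever the last letter of s is l. Then there exists a constant c ∈ ℂ such that ψ(s) = c for every Motzkin path s and ψ(s) = 0 for every s that is not a Motzkin path. Conversely, any such ψ satisfies (i), (ii), (iii). (This expresses that the Motzkin state is the unique zero-energy ground state of the frustration-free Hamiltonian H = |r⟩⟨r|_1 + |l⟩⟨l|_n + Σ_j Π_{j,j+1}.) -/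

import Mathlib

/-- The three-letter alphabet `Σ = {0, l, r}` (named `Tri` to avoid a clash with Mathlib). -/
inductive Tri : Type
  | zero : Tri
  | left : Tri
  | right : Tri
  deriving DecidableEq

/-- A string is a Motzkin path iff every prefix contains at least as many `l`'s as
`r`'s and the total number of `l`'s equals the total number of `r`'s. -/
def IsMotzkin (s : List Tri) : Prop :=
  (∀ j : ℕ, (s.take j).count Tri.right ≤ (s.take j).count Tri.left) ∧
    s.count Tri.left = s.count Tri.right

namespace Stmt9
open Tri List

def step : ℕ × ℕ → Tri → ℕ × ℕ
  | p, Tri.zero => p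
  | p, Tri.left => (p.1, p.2 + 1)
  | p, Tri.right => if p.2 = 0 then (p.1 + 1, 0) else (p.1, p.2 - 1)

def red (s : List Tri) : ℕ × ℕ := s.foldl step (0, 0)

lemma red_append (s t : List Tri) : red (s ++ t) = t.foldl step (red s) := by
  simp [red, List.foldl_append]

lemma red_concat (s : List Tri) (x : Tri) : red (s ++ [x]) = step (red s) x := by
  simp [red_append]

lemma step_fst_le (p : ℕ × ℕ) (x : Tri) : p.1 ≤ (step p x).1 := by
  cases x <;> simp [step] <;> split <;> simp

lemma foldl_fst_le (t : List Tri) (p : ℕ × ℕ) : p.1 ≤ (t.foldl step p).1 := by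
  induction t generalizing p with
  | nil => simp
  | cons x t ih => exact le_trans (step_fst_le p x) (ih _)

lemma invariant (t : List Tri) (p : ℕ × ℕ) :
    (t.foldl step p).1 + t.count Tri.left + p.2
      = (t.foldl step p).2 + t.count Tri.right + p.1 := by
  induction t generalizing p with
  | nil => simp [Nat.add_comm]
  | cons x t ih =>
    cases x
    · have h := ih p
      simp only [List.foldl_cons, step, List.count_cons] at h ⊢
      simp only [beq_iff_eq, reduceCtorEq, reduceIte] at h ⊢
      omega
    · have h := ih (p.1, p.2 + 1)
      simp only [List.foldl_cons, step, List.count_cons] at h ⊢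
      simp only [beq_iff_eq, reduceCtorEq, reduceIte] at h ⊢
      omega
    · rcases Nat.eq_zero_or_pos p.2 with h2 | h2
      · have h := ih (p.1 + 1, 0)
        simp only [List.foldl_cons, step, List.count_cons, if_pos h2] at h ⊢
        simp only [beq_iff_eq, reduceCtorEq, reduceIte] at h ⊢
        omega
      · have h := ih (p.1, p.2 - 1)
        simp only [List.foldl_cons, step, List.count_cons, if_neg (Nat.pos_iff_ne_zero.mp h2)] at h ⊢
        simp only [beq_iff_eq, reduceCtorEq, reduceIte] at h ⊢
        omega

lemma red_invariant (s : List Tri) :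
    (red s).1 + s.count Tri.left = (red s).2 + s.count Tri.right := by
  have := invariant s (0, 0)
  simpa [red] using this

lemma sum_le_length (t : List Tri) (p : ℕ × ℕ) :
    (t.foldl step p).1 + (t.foldl step p).2 ≤ p.1 + p.2 + t.length := by
  induction t generalizing p with
  | nil => simp
  | cons x t ih =>
    have h := ih (step p x)
    have : (step p x).1 + (step p x).2 ≤ p.1 + p.2 + 1 := by
      cases x
      · simp [step]
      · simp [step]; omega
      · simp only [step]
        split <;> simp <;> omega
    simp only [List.foldl_cons, List.length_cons]
    omega

lemma red_sum_le (s : List Tri) : (red s).1 + (red s).2 ≤ s.length := by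
  have := sum_le_length s (0, 0)
  simpa [red] using this

lemma bad_prefix_of_fst_ne (s : List Tri) (h : (red s).1 ≠ 0) :
    ∃ t, t <+: s ∧ t.count Tri.left < t.count Tri.right := by
  induction s using List.reverseRecOn with
  | nil => simp [red] at h
  | append_singleton t x ih =>
    rcases Nat.eq_zero_or_pos (red t).1 with h1 | h1
    · -- x must be right and (red t).2 = 0
      rw [red_concat] at h
      have hx : x = Tri.right ∧ (red t).2 = 0 := by
        cases x <;> simp [step, h1] at h ⊢
        by_contra hb
        rw [if_neg hb] at h
        simp [h1] at h
      obtain ⟨rfl, h2⟩ := hx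
      have hinv := red_invariant t
      refine ⟨t ++ [Tri.right], List.prefix_refl _, ?_⟩
      simp [List.count_append]
      omega
    · obtain ⟨t', ht', hc⟩ := ih (by omega)
      exact ⟨t', ht'.trans (List.prefix_append _ _), hc⟩

lemma prefix_count_of_fst_eq (s : List Tri) (h : (red s).1 = 0) (j : ℕ) :
    (s.take j).count Tri.right ≤ (s.take j).count Tri.left := by
  have hsplit : red s = (s.drop j).foldl step (red (s.take j)) := by
    conv_lhs => rw [← List.take_append_drop j s]
    exact red_append _ _
  rw [hsplit] at h
  have h1 : (red (s.take j)).1 = 0 := by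
    have := foldl_fst_le (s.drop j) (red (s.take j))
    omega
  have := red_invariant (s.take j)
  omega

lemma isMotzkin_iff_red (s : List Tri) : IsMotzkin s ↔ red s = (0, 0) := by
  constructor
  · rintro ⟨hpre, hcount⟩
    have h1 : (red s).1 = 0 := by
      by_contra h
      obtain ⟨t, ht, hc⟩ := bad_prefix_of_fst_ne s h
      have := hpre t.length
      rw [List.prefix_iff_eq_take.mp ht] at hc
      omega
    have := red_invariant s
    have h2 : (red s).2 = 0 := by omega
    exact Prod.ext h1 h2
  · intro h
    constructor
    · exact prefix_count_of_fst_eq s (by simp [h])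
    · have := red_invariant s
      rw [h] at this
      simpa using this


section Moves

variable (n : ℕ) (hn : 2 ≤ n) (ψ : List Tri → ℂ)
variable (h1 : ∀ u v : List Tri, u.length + v.length = n - 2 →
        ψ (u ++ [Tri.zero, Tri.zero] ++ v) = ψ (u ++ [Tri.left, Tri.right] ++ v) ∧
        ψ (u ++ [Tri.zero, Tri.left] ++ v) = ψ (u ++ [Tri.left, Tri.zero] ++ v) ∧
        ψ (u ++ [Tri.zero, Tri.right] ++ v) = ψ (u ++ [Tri.right, Tri.zero] ++ v))

include hn h1

lemma mv00 (u v : List Tri) (h : u.length + 2 + v.length = n) :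
    ψ (u ++ [Tri.zero, Tri.zero] ++ v) = ψ (u ++ [Tri.left, Tri.right] ++ v) :=
  (h1 u v (by omega)).1

lemma mv0l (u v : List Tri) (h : u.length + 2 + v.length = n) :
    ψ (u ++ [Tri.zero, Tri.left] ++ v) = ψ (u ++ [Tri.left, Tri.zero] ++ v) :=
  (h1 u v (by omega)).2.1

lemma mv0r (u v : List Tri) (h : u.length + 2 + v.length = n) :
    ψ (u ++ [Tri.zero, Tri.right] ++ v) = ψ (u ++ [Tri.right, Tri.zero] ++ v) :=
  (h1 u v (by omega)).2.2

/-- Move a `0` leftwards past a block of `l`'s. -/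
lemma zero_past_left (b : ℕ) : ∀ p w : List Tri,
    p.length + (b + 1 + w.length) = n →
    ψ (p ++ (List.replicate b Tri.left ++ ([Tri.zero] ++ w)))
      = ψ (p ++ ([Tri.zero] ++ (List.replicate b Tri.left ++ w))) := by
  induction b with
  | zero => intro p w h; simp
  | succ b ih =>
    intro p w h
    have e1 : p ++ (List.replicate (b+1) Tri.left ++ ([Tri.zero] ++ w))
        = (p ++ [Tri.left]) ++ (List.replicate b Tri.left ++ ([Tri.zero] ++ w)) := by
      simp [List.replicate_succ]
    have e2 : (p ++ [Tri.left]) ++ ([Tri.zero] ++ (List.replicate b Tri.left ++ w))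
        = p ++ [Tri.left, Tri.zero] ++ (List.replicate b Tri.left ++ w) := by
      simp
    have e3 : p ++ [Tri.zero, Tri.left] ++ (List.replicate b Tri.left ++ w)
        = p ++ ([Tri.zero] ++ (List.replicate (b+1) Tri.left ++ w)) := by
      simp [List.replicate_succ]
    rw [e1, ih (p ++ [Tri.left]) w (by simp at h ⊢; omega), e2,
      ← mv0l n hn ψ h1 p (List.replicate b Tri.left ++ w) (by simp at h ⊢; omega), e3]

/-- Move an `r` leftwards past a block of `0`'s. -/
lemma right_past_zero (k : ℕ) : ∀ p w : List Tri,
    p.length + (k + 1 + w.length) = n →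
    ψ (p ++ (List.replicate k Tri.zero ++ ([Tri.right] ++ w)))
      = ψ (p ++ ([Tri.right] ++ (List.replicate k Tri.zero ++ w))) := by
  induction k with
  | zero => intro p w h; simp
  | succ k ih =>
    intro p w h
    have e1 : p ++ (List.replicate (k+1) Tri.zero ++ ([Tri.right] ++ w))
        = (p ++ [Tri.zero]) ++ (List.replicate k Tri.zero ++ ([Tri.right] ++ w)) := by
      simp [List.replicate_succ]
    have e2 : (p ++ [Tri.zero]) ++ ([Tri.right] ++ (List.replicate k Tri.zero ++ w))
        = p ++ [Tri.zero, Tri.right] ++ (List.replicate k Tri.zero ++ w) := by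
      simp
    have e3 : p ++ [Tri.right, Tri.zero] ++ (List.replicate k Tri.zero ++ w)
        = p ++ ([Tri.right] ++ (List.replicate (k+1) Tri.zero ++ w)) := by
      simp [List.replicate_succ]
    rw [e1, ih (p ++ [Tri.zero]) w (by simp at h ⊢; omega), e2,
      mv0r n hn ψ h1 p (List.replicate k Tri.zero ++ w) (by simp at h ⊢; omega), e3]

end Moves

def canon (a k b : ℕ) : List Tri :=
  List.replicate a Tri.right ++ (List.replicate k Tri.zero ++ List.replicate b Tri.left)

@[simp] lemma canon_length (a k b : ℕ) : (canon a k b).length = a + (k + b) := by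
  simp [canon]

section Main

variable (n : ℕ) (hn : 2 ≤ n) (ψ : List Tri → ℂ)
variable (h1 : ∀ u v : List Tri, u.length + v.length = n - 2 →
        ψ (u ++ [Tri.zero, Tri.zero] ++ v) = ψ (u ++ [Tri.left, Tri.right] ++ v) ∧
        ψ (u ++ [Tri.zero, Tri.left] ++ v) = ψ (u ++ [Tri.left, Tri.zero] ++ v) ∧
        ψ (u ++ [Tri.zero, Tri.right] ++ v) = ψ (u ++ [Tri.right, Tri.zero] ++ v))

include hn h1

lemma to_canon : ∀ t : List Tri, ∃ k, t.length = (red t).1 + (k + (red t).2) ∧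
    ∀ w : List Tri, t.length + w.length = n →
      ψ (t ++ w) = ψ (canon (red t).1 k (red t).2 ++ w) := by
  intro t
  induction t using List.reverseRecOn with
  | nil => exact ⟨0, by simp [red], fun w h => by simp [canon, red]⟩
  | append_singleton t x ih =>
    obtain ⟨k, hk, hw⟩ := ih
    have hred := red_concat t x
    cases x with
    | zero =>
      refine ⟨k + 1, ?_, ?_⟩
      · rw [hred]; simp only [step, List.length_append, List.length_singleton]; omega
      · intro w h
        rw [hred]
        simp only [step]
        have e0 : t ++ [Tri.zero] ++ w = t ++ ([Tri.zero] ++ w) := by simp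
        rw [e0, hw ([Tri.zero] ++ w) (by simp at h ⊢; omega)]
        have e1 : canon (red t).1 k (red t).2 ++ ([Tri.zero] ++ w)
            = (List.replicate (red t).1 Tri.right ++ List.replicate k Tri.zero)
              ++ (List.replicate (red t).2 Tri.left ++ ([Tri.zero] ++ w)) := by
          simp [canon]
        have e2 : (List.replicate (red t).1 Tri.right ++ List.replicate k Tri.zero)
              ++ ([Tri.zero] ++ (List.replicate (red t).2 Tri.left ++ w))
            = canon (red t).1 (k + 1) (red t).2 ++ w := by
          simp [canon, List.replicate_succ']
        rw [e1, zero_past_left n hn ψ h1 (red t).2 _ w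
          (by simp at h ⊢; omega), e2]
    | left =>
      refine ⟨k, ?_, ?_⟩
      · rw [hred]; simp only [step, List.length_append, List.length_singleton]; omega
      · intro w h
        rw [hred]
        simp only [step]
        have e0 : t ++ [Tri.left] ++ w = t ++ ([Tri.left] ++ w) := by simp
        rw [e0, hw ([Tri.left] ++ w) (by simp at h ⊢; omega)]
        congr 1
        simp [canon, List.replicate_succ']
    | right =>
      rcases Nat.eq_zero_or_pos (red t).2 with hb | hb
      · refine ⟨k, ?_, ?_⟩
        · rw [hred]; simp only [step, if_pos hb, List.length_append,
            List.length_singleton]; omega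
        · intro w h
          rw [hred]
          simp only [step, if_pos hb]
          have e0 : t ++ [Tri.right] ++ w = t ++ ([Tri.right] ++ w) := by simp
          rw [e0, hw ([Tri.right] ++ w) (by simp at h ⊢; omega)]
          have e1 : canon (red t).1 k (red t).2 ++ ([Tri.right] ++ w)
              = List.replicate (red t).1 Tri.right
                ++ (List.replicate k Tri.zero ++ ([Tri.right] ++ w)) := by
            simp [canon, hb]
          have e2 : List.replicate (red t).1 Tri.right
                ++ ([Tri.right] ++ (List.replicate k Tri.zero ++ w))
              = canon ((red t).1 + 1) k 0 ++ w := by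
            simp [canon, List.replicate_succ']
          rw [e1, right_past_zero n hn ψ h1 k _ w (by simp [hb] at h ⊢; omega), e2]
      · obtain ⟨b', hb'⟩ : ∃ b', (red t).2 = b' + 1 := ⟨(red t).2 - 1, by omega⟩
        refine ⟨k + 2, ?_, ?_⟩
        · rw [hred]; simp only [step, hb', if_neg (Nat.succ_ne_zero b'), Nat.add_sub_cancel,
            List.length_append, List.length_singleton]; omega
        · intro w h
          rw [hred]
          simp only [step, hb', if_neg (Nat.succ_ne_zero b'), Nat.add_sub_cancel]
          have e0 : t ++ [Tri.right] ++ w = t ++ ([Tri.right] ++ w) := by simp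
          rw [e0, hw ([Tri.right] ++ w) (by simp at h ⊢; omega)]
          set p : List Tri := List.replicate (red t).1 Tri.right
            ++ List.replicate k Tri.zero with hp
          have hplen : p.length = (red t).1 + k := by simp [hp]
          have e1 : canon (red t).1 k (red t).2 ++ ([Tri.right] ++ w)
              = (p ++ List.replicate b' Tri.left) ++ [Tri.left, Tri.right] ++ w := by
            simp [canon, hp, hb', List.replicate_succ']
          have e2 : (p ++ List.replicate b' Tri.left) ++ [Tri.zero, Tri.zero] ++ w
              = p ++ (List.replicate b' Tri.left ++ ([Tri.zero] ++ ([Tri.zero] ++ w))) := by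
            simp
          have hlen : t.length + 1 + w.length = n := by simp at h; omega
          have hbk : t.length = (red t).1 + (k + (b' + 1)) := by rw [← hb']; exact hk
          rw [e1, ← mv00 n hn ψ h1 (p ++ List.replicate b' Tri.left) w
            (by simp [hplen]; omega), e2,
            zero_past_left n hn ψ h1 b' p ([Tri.zero] ++ w) (by simp [hplen]; omega)]
          have e3 : p ++ ([Tri.zero] ++ (List.replicate b' Tri.left ++ ([Tri.zero] ++ w)))
              = (p ++ [Tri.zero]) ++ (List.replicate b' Tri.left ++ ([Tri.zero] ++ w)) := by
            simp
          rw [e3, zero_past_left n hn ψ h1 b' (p ++ [Tri.zero]) w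
            (by simp [hplen]; omega)]
          congr 1
          simp [canon, hp, List.replicate_succ']

end Main

end Stmt9

open Stmt9

attribute [local instance] Classical.propDecidable

/-- A function `ψ : Σ^n → ℂ` is annihilated by all the projectors of the
frustration-free Hamiltonian `H = |r⟩⟨r|_1 + |l⟩⟨l|_n + Σ_j Π_{j,j+1}` — i.e.
(i) it takes equal values on strings related by a local move `00 ↔ lr`, `0l ↔ l0`,
`0r ↔ r0`, (ii) it vanishes on strings starting with `r`, and (iii) it vanishes on
strings ending with `l` — if and only if it is a constant multiple of the indicator
of Motzkin paths.  (The Motzkin state is the unique zero-energy ground state.) -/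
theorem stmt9 (n : ℕ) (hn : 2 ≤ n) (ψ : List Tri → ℂ) :
    ((∀ u v : List Tri, u.length + v.length = n - 2 →
        ψ (u ++ [Tri.zero, Tri.zero] ++ v) = ψ (u ++ [Tri.left, Tri.right] ++ v) ∧
        ψ (u ++ [Tri.zero, Tri.left] ++ v) = ψ (u ++ [Tri.left, Tri.zero] ++ v) ∧
        ψ (u ++ [Tri.zero, Tri.right] ++ v) = ψ (u ++ [Tri.right, Tri.zero] ++ v)) ∧
      (∀ s : List Tri, s.length = n → s.head? = some Tri.right → ψ s = 0) ∧
      (∀ s : List Tri, s.length = n → s.getLast? = some Tri.left → ψ s = 0)) ↔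
    (∃ c : ℂ, ∀ s : List Tri, s.length = n →
        ψ s = if IsMotzkin s then c else 0) := by
  constructor
  · rintro ⟨h1, h2, h3⟩
    refine ⟨ψ (List.replicate n Tri.zero), fun s hs => ?_⟩
    obtain ⟨k, hk, hw⟩ := to_canon n hn ψ h1 s
    have hcanon : ψ s = ψ (canon (red s).1 k (red s).2) := by
      have := hw [] (by simp [hs])
      simpa using this
    have hlen : (canon (red s).1 k (red s).2).length = n := by
      simp [hs ▸ hk]
    rcases Nat.eq_zero_or_pos (red s).1 with ha | ha
    · rcases Nat.eq_zero_or_pos (red s).2 with hb | hb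
      · -- Motzkin case
        have hm : IsMotzkin s := (isMotzkin_iff_red s).mpr (Prod.ext ha hb)
        rw [if_pos hm, hcanon]
        congr 1
        have : k = n := by rw [hs] at hk; omega
        simp [canon, ha, hb, this]
      · -- ends with left
        have hm : ¬ IsMotzkin s := by
          rw [isMotzkin_iff_red s]
          intro hcontra
          rw [hcontra] at hb
          simp at hb
        rw [if_neg hm, hcanon]
        obtain ⟨b', hb'⟩ : ∃ b', (red s).2 = b' + 1 := ⟨(red s).2 - 1, by omega⟩
        apply h3 _ hlen
        have e : canon (red s).1 k (red s).2
            = (List.replicate (red s).1 Tri.right ++ List.replicate k Tri.zero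
                ++ List.replicate b' Tri.left) ++ [Tri.left] := by
          simp [canon, hb', List.replicate_succ']
        rw [e, List.getLast?_concat]
    · -- starts with right
      have hm : ¬ IsMotzkin s := by
        rw [isMotzkin_iff_red s]
        intro hcontra
        rw [hcontra] at ha
        simp at ha
      rw [if_neg hm, hcanon]
      obtain ⟨a', ha'⟩ : ∃ a', (red s).1 = a' + 1 := ⟨(red s).1 - 1, by omega⟩
      apply h2 _ hlen
      have e : canon (red s).1 k (red s).2
          = Tri.right :: (List.replicate a' Tri.right
              ++ (List.replicate k Tri.zero ++ List.replicate (red s).2 Tri.left)) := by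
        simp [canon, ha', List.replicate_succ]
      rw [e, List.head?_cons]
  · rintro ⟨c, hc⟩
    have hstep00 : ∀ p : ℕ × ℕ, step (step p Tri.left) Tri.right = p := by
      intro p
      simp [step]
    refine ⟨?_, ?_, ?_⟩
    · intro u v huv
      have l1 : (u ++ [Tri.zero, Tri.zero] ++ v).length = n := by simp; omega
      have l2 : (u ++ [Tri.left, Tri.right] ++ v).length = n := by simp; omega
      have l3 : (u ++ [Tri.zero, Tri.left] ++ v).length = n := by simp; omega
      have l4 : (u ++ [Tri.left, Tri.zero] ++ v).length = n := by simp; omega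
      have l5 : (u ++ [Tri.zero, Tri.right] ++ v).length = n := by simp; omega
      have l6 : (u ++ [Tri.right, Tri.zero] ++ v).length = n := by simp; omega
      have key : ∀ x y x' y' : Tri, step (step (red u) x) y = step (step (red u) x') y' →
          (if IsMotzkin (u ++ [x, y] ++ v) then c else (0:ℂ))
            = if IsMotzkin (u ++ [x', y'] ++ v) then c else 0 := by
        intro x y x' y' hxy
        have er : ∀ z w : Tri, red (u ++ [z, w] ++ v)
            = v.foldl step (step (step (red u) z) w) := by
          intro z w
          rw [show u ++ [z, w] ++ v = u ++ ([z] ++ ([w] ++ v)) by simp, red_append]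
          simp
        have : IsMotzkin (u ++ [x, y] ++ v) ↔ IsMotzkin (u ++ [x', y'] ++ v) := by
          rw [isMotzkin_iff_red, isMotzkin_iff_red, er, er, hxy]
        by_cases hM : IsMotzkin (u ++ [x, y] ++ v)
        · rw [if_pos hM, if_pos (this.mp hM)]
        · rw [if_neg hM, if_neg (fun hh => hM (this.mpr hh))]
      refine ⟨?_, ?_, ?_⟩
      · rw [hc _ l1, hc _ l2]
        exact key _ _ _ _ (by rw [hstep00]; rfl)
      · rw [hc _ l3, hc _ l4]
        exact key _ _ _ _ (by simp [step])
      · rw [hc _ l5, hc _ l6]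
        exact key _ _ _ _ (by rfl)
    · intro s hs hhead
      cases s with
      | nil => simp at hhead
      | cons x t =>
        simp at hhead
        subst hhead
        have hred : (red (Tri.right :: t)).1 ≠ 0 := by
          have : red (Tri.right :: t) = t.foldl step (1, 0) := by
            simp [red, step]
          rw [this]
          have := foldl_fst_le t (1, 0)
          omega
        rw [hc _ hs, if_neg]
        intro hM
        rw [isMotzkin_iff_red] at hM
        rw [hM] at hred
        simp at hred
    · intro s hs hlast
      induction s using List.reverseRecOn with
      | nil => simp at hlast
      | append_singleton t x _ =>
        rw [List.getLast?_concat] at hlast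
        have hx : x = Tri.left := by simpa using hlast
        subst hx
        have hred : (red (t ++ [Tri.left])).2 ≠ 0 := by
          rw [red_concat]
          simp [step]
        rw [hc _ hs, if_neg]
        intro hM
        rw [isMotzkin_iff_red] at hM
        rw [hM] at hred
        simp at hred
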